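/- Let aa and bb be finite sequences of elements of a commutative ring A generating ideals 𝔞 and 𝔟 respectively, with √𝔞 = √𝔟. Then aa is a weakly proregular sequence if and only if bb is a weakly proregular sequence. -/

import Mathlib

/-!
We use an explicit model for the Koszul complex `K(A; aa)` of a finite sequence
`aa = (a_1, ..., a_n)` in a commutative ring `A`: the degree `-q` component is the
free module of functions on the `q`-element subsets of `Fin n` (corresponding to the
basis of `Λ^q(A^n)`), and the differential is contraction against `aa` with the usual
signs.  The transition map `μ_{j,i} : K(A; aa^j) → K(A; aa^i)` multiplies the
component indexed by a subset `s` by `∏_{k ∈ s} a_k^(j-i)`.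

A sequence is weakly proregular if for every `q < 0` the inverse system
`{H^q(K(A; aa^i))}` is pro-zero: for every `i` there is `j ≥ i` such that the
transition map `H^q(K(A; aa^j)) → H^q(K(A; aa^i))` is zero, i.e. every degree `-q`
cocycle at level `j` is sent by `μ_{j,i}` to a coboundary at level `i`.
-/

/-- The degree `-q` component of the Koszul complex on `n` elements. -/
abbrev KoszulDeg (A : Type*) (n q : ℕ) : Type _ :=
  {s : Finset (Fin n) // s.card = q} → A

/-- The Koszul differential `K(A; aa)^{-(q+1)} → K(A; aa)^{-q}`, given by contraction
against the sequence `aa`, with the usual signs. -/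
noncomputable def koszulD {A : Type*} [CommRing A] {n : ℕ} (aa : Fin n → A) (q : ℕ)
    (f : KoszulDeg A n (q + 1)) : KoszulDeg A n q :=
  fun s => ∑ i ∈ (s.val)ᶜ.attach,
    (-1 : A) ^ (s.val.filter (fun k => k < i.val)).card * aa i.val *
      f ⟨insert i.val s.val, by
        rw [Finset.card_insert_of_notMem (Finset.mem_compl.mp i.property), s.property]⟩

/-- The transition map `μ_{j,i}` of the inverse system of Koszul complexes, in degree
`-q`, for exponents `j ≥ i` with `e = j - i`: multiplication by `∏_{k ∈ s} a_k^e` on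
the component indexed by the subset `s`. -/
noncomputable def koszulTransition {A : Type*} [CommRing A] {n : ℕ} (aa : Fin n → A)
    (e q : ℕ) (f : KoszulDeg A n q) : KoszulDeg A n q :=
  fun s => (∏ k ∈ s.val, aa k ^ e) * f s

/-- A finite sequence `aa` in a commutative ring `A` is weakly proregular if for every
`q < 0` the inverse system of Koszul cohomologies `{H^q(K(A; aa^i))}_{i ∈ ℕ}` is
pro-zero: for each `i` there is `j ≥ i` such that every cocycle of `K(A; aa^j)` in
degree `q` becomes a coboundary in `K(A; aa^i)` after applying `μ_{j,i}`. -/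
def IsWeaklyProregular {A : Type*} [CommRing A] {n : ℕ} (aa : Fin n → A) : Prop :=
  ∀ q i : ℕ, ∃ j : ℕ, i ≤ j ∧ ∀ f : KoszulDeg A n (q + 1),
    koszulD (fun k => aa k ^ j) q f = 0 →
    ∃ g : KoszulDeg A n (q + 2),
      koszulD (fun k => aa k ^ i) (q + 1) g = koszulTransition aa (j - i) (q + 1) f

/-- An ideal is weakly proregular if it is generated by a weakly proregular finite
sequence. -/
def Ideal.IsWeaklyProregular {A : Type*} [CommRing A] (I : Ideal A) : Prop :=
  ∃ (n : ℕ) (aa : Fin n → A), Ideal.span (Set.range aa) = I ∧ _root_.IsWeaklyProregular aa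

/-!
`K(cc, b)` is the mapping cone of multiplication by `b` on `K(cc)`. The ideal generated by a
sequence kills the cohomology of its Koszul complex (`e_k ∧ -` is a null-homotopy of
multiplication by `c_k`), and if `b ∈ √(cc)` then a power of `b` lies in `(cc^i)` for every `i`.
A diagram chase through the cone then shows that appending `b` to `cc`, or removing it, preserves
weak proregularity. Appending all of `bb` to `aa` and then removing all of `aa` proves the theorem; since elements
are removed from the end, `aa` is first moved there by reversing the sequence, which changes its
Koszul complex only up to isomorphism.
-/

section Combinatorics

open Finset Fin

variable {n : ℕ}

lemma card_filter_lt_add_card_filter_lt_insert {α : Type*} [LinearOrder α] {s : Finset α}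
    {i k : α} (hk : k ∈ s) (hi : i ∉ s) :
    #{l ∈ s | l < i} + #{l ∈ insert i s | l < k}
      = #{l ∈ s | l < k} + #{l ∈ s.erase k | l < i} + 1 := by
  have hik : i ≠ k := fun h => hi (h ▸ hk)
  rw [filter_insert, filter_erase]
  rcases hik.lt_or_gt with hlt | hgt
  · rw [if_pos hlt, card_insert_of_notMem fun h => hi (mem_filter.mp h).1,
      erase_eq_of_notMem fun h => (mem_filter.mp h).2.asymm hlt]
    ring
  · rw [if_neg hgt.asymm, ← card_erase_add_one (mem_filter.mpr ⟨hk, hgt⟩)]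
    ring

lemma Fin.last_notMem_map_castSuccEmb (t : Finset (Fin n)) : last n ∉ t.map castSuccEmb := by
  simp

lemma Fin.card_insert_last_map_castSuccEmb (t : Finset (Fin n)) :
    #(insert (last n) (t.map castSuccEmb)) = #t + 1 := by
  simp

lemma Fin.compl_map_castSuccEmb (t : Finset (Fin n)) :
    (t.map castSuccEmb)ᶜ = insert (last n) (tᶜ.map castSuccEmb) := by
  ext x
  cases x using lastCases <;> simp

lemma Fin.compl_insert_last_map_castSuccEmb (t : Finset (Fin n)) :
    (insert (last n) (t.map castSuccEmb))ᶜ = tᶜ.map castSuccEmb := by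
  rw [compl_insert, compl_map_castSuccEmb, erase_insert (last_notMem_map_castSuccEmb _)]

lemma Fin.card_filter_map_castSuccEmb_lt (t : Finset (Fin n)) (i : Fin n) :
    #{k ∈ t.map castSuccEmb | k < castSucc i} = #{k ∈ t | k < i} := by
  simp [filter_map, Function.comp_def]

lemma Fin.card_filter_insert_last_map_castSuccEmb_lt (t : Finset (Fin n)) (i : Fin n) :
    #{k ∈ insert (last n) (t.map castSuccEmb) | k < castSucc i} = #{k ∈ t | k < i} := by
  rw [filter_insert, if_neg (castSucc_lt_last i).asymm, card_filter_map_castSuccEmb_lt]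

lemma Fin.filter_map_castSuccEmb_lt_last (t : Finset (Fin n)) :
    {k ∈ t.map castSuccEmb | k < last n} = t.map castSuccEmb :=
  filter_true_of_mem fun x hx => by
    obtain ⟨k, -, rfl⟩ := mem_map.mp hx
    exact castSucc_lt_last k

lemma Fin.exists_eq_map_castSuccEmb (S : Finset (Fin (n + 1))) :
    ∃ t : Finset (Fin n), S = t.map castSuccEmb ∨ S = insert (last n) (t.map castSuccEmb) := by
  refine ⟨S.preimage castSucc (castSucc_injective n).injOn, ?_⟩
  by_cases h : last n ∈ S
  · right
    ext x
    cases x using lastCases <;> simp [h]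
  · left
    ext x
    cases x using lastCases <;> simp [h]

lemma Fin.preimage_castSucc_map_castSuccEmb (t : Finset (Fin n)) :
    (t.map castSuccEmb).preimage castSucc (castSucc_injective n).injOn = t := by
  ext
  simp

lemma Fin.preimage_castSucc_insert_last_map_castSuccEmb (t : Finset (Fin n)) :
    (insert (last n) (t.map castSuccEmb)).preimage castSucc (castSucc_injective n).injOn = t := by
  ext
  simp

lemma Fin.compl_map_revPerm (s : Finset (Fin n)) :
    (s.map revPerm.toEmbedding)ᶜ = sᶜ.map revPerm.toEmbedding := by
  ext
  simp [mem_map_equiv]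

lemma Fin.map_revPerm_map_revPerm (s : Finset (Fin n)) :
    (s.map revPerm.toEmbedding).map revPerm.toEmbedding = s := by
  ext
  simp [mem_map_equiv]

lemma Fin.card_filter_map_revPerm_lt_add {s : Finset (Fin n)} {i : Fin n} (hi : i ∉ s) :
    #{k ∈ s.map revPerm.toEmbedding | k < rev i} + #{k ∈ s | k < i} = #s := by
  rw [filter_map, card_map, add_comm, ← card_filter_add_card_filter_not (s := s) (fun k => k < i)]
  congr 2
  refine filter_congr fun k hk => ?_
  simp only [Function.comp_apply, Equiv.coe_toEmbedding, revPerm_apply, rev_lt_rev, not_lt]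
  exact ⟨le_of_lt, fun h => h.lt_of_ne fun e => hi (e ▸ hk)⟩

lemma Fin.snoc_pow {M : Type*} [Monoid M] (xx : Fin n → M) (y : M) (j : ℕ) :
    snoc (α := fun _ => M) xx y ^ j = snoc (α := fun _ => M) (xx ^ j) (y ^ j) :=
  comp_snoc (· ^ j) xx y

lemma neg_one_pow_mul_self {R : Type*} [Monoid R] [HasDistribNeg R] (m : ℕ) :
    (-1 : R) ^ m * (-1) ^ m = 1 := by
  rw [← pow_add, Even.neg_one_pow ⟨m, rfl⟩]

end Combinatorics

section Cochains

open Finset Fin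

variable {A : Type*} {n : ℕ}

/- `K(xx, y)` is the mapping cone of multiplication by `y` on `K(xx)`: a cochain on the subsets
of `Fin (n + 1)` splits into its values on the subsets avoiding `last n` (`coneFst`) and on those
containing it (`coneSnd`). -/
def coneFst {q : ℕ} (f : KoszulDeg A (n + 1) q) : KoszulDeg A n q :=
  fun t => f ⟨t.val.map castSuccEmb, by rw [card_map, t.property]⟩

def coneSnd {q : ℕ} (f : KoszulDeg A (n + 1) (q + 1)) : KoszulDeg A n q :=
  fun t => f ⟨insert (last n) (t.val.map castSuccEmb), by
    rw [card_insert_last_map_castSuccEmb, t.property]⟩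

lemma cone_ext {q : ℕ} {f g : KoszulDeg A (n + 1) (q + 1)} (h₁ : coneFst f = coneFst g)
    (h₂ : coneSnd f = coneSnd g) : f = g := by
  ext ⟨S, hS⟩
  obtain ⟨t, rfl | rfl⟩ := exists_eq_map_castSuccEmb S
  · rw [card_map] at hS
    exact congrFun h₁ ⟨t, hS⟩
  · rw [card_insert_last_map_castSuccEmb, Nat.add_right_cancel_iff] at hS
    exact congrFun h₂ ⟨t, hS⟩

lemma cone_ext_zero {f g : KoszulDeg A (n + 1) 0} (h : coneFst f = coneFst g) : f = g := by
  ext ⟨S, hS⟩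
  obtain rfl := card_eq_zero.mp hS
  exact congrFun h ⟨∅, card_empty⟩

variable [Zero A]

noncomputable def koszulExtend {q : ℕ} (f : KoszulDeg A n q) (t : Finset (Fin n)) : A :=
  if h : t.card = q then f ⟨t, h⟩ else 0

lemma koszulExtend_of_card {q : ℕ} (f : KoszulDeg A n q) {t : Finset (Fin n)} (h : t.card = q) :
    koszulExtend f t = f ⟨t, h⟩ :=
  dif_pos h

lemma koszulExtend_map_castSuccEmb {q : ℕ} (f : KoszulDeg A (n + 1) q) (t : Finset (Fin n)) :
    koszulExtend f (t.map castSuccEmb) = koszulExtend (coneFst f) t := by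
  simp only [koszulExtend, card_map]
  rfl

lemma koszulExtend_insert_last_map_castSuccEmb {q : ℕ} (f : KoszulDeg A (n + 1) (q + 1))
    (t : Finset (Fin n)) :
    koszulExtend f (insert (last n) (t.map castSuccEmb)) = koszulExtend (coneSnd f) t := by
  simp only [koszulExtend, card_insert_last_map_castSuccEmb, Nat.add_right_cancel_iff]
  rfl

noncomputable def coneMk {q : ℕ} (p : KoszulDeg A n (q + 1)) (w : KoszulDeg A n q) :
    KoszulDeg A (n + 1) (q + 1) :=
  fun s =>
    let t := s.val.preimage castSucc (castSucc_injective n).injOn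
    if last n ∈ s.val then koszulExtend w t else koszulExtend p t

lemma coneFst_coneMk {q : ℕ} (p : KoszulDeg A n (q + 1)) (w : KoszulDeg A n q) :
    coneFst (coneMk p w) = p := by
  ext t
  simp only [coneFst, coneMk, if_neg (last_notMem_map_castSuccEmb _),
    preimage_castSucc_map_castSuccEmb, koszulExtend_of_card _ t.property]

lemma coneSnd_coneMk {q : ℕ} (p : KoszulDeg A n (q + 1)) (w : KoszulDeg A n q) :
    coneSnd (coneMk p w) = w := by
  ext t
  simp only [coneSnd, coneMk, if_pos (mem_insert_self _ _),
    preimage_castSucc_insert_last_map_castSuccEmb, koszulExtend_of_card _ t.property]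

end Cochains

section Koszul

open Finset Fin

variable {A : Type*} [CommRing A] {n : ℕ}

lemma koszulD_apply (xx : Fin n → A) (q : ℕ) (f : KoszulDeg A n (q + 1))
    (s : {s : Finset (Fin n) // s.card = q}) :
    koszulD xx q f s = ∑ i ∈ s.valᶜ,
      (-1 : A) ^ #{k ∈ s.val | k < i} * xx i * koszulExtend f (insert i s.val) := by
  rw [koszulD, ← sum_attach s.valᶜ]
  exact sum_congr rfl fun i _ => by rw [koszulExtend_of_card]

lemma koszulD_add (xx : Fin n → A) (q : ℕ) (f g : KoszulDeg A n (q + 1)) :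
    koszulD xx q (f + g) = koszulD xx q f + koszulD xx q g := by
  ext s
  simp only [koszulD, Pi.add_apply, mul_add, sum_add_distrib]

lemma koszulD_smul (xx : Fin n → A) (q : ℕ) (c : A) (f : KoszulDeg A n (q + 1)) :
    koszulD xx q (c • f) = c • koszulD xx q f := by
  ext s
  simp only [koszulD, Pi.smul_apply, smul_eq_mul, mul_sum]
  exact sum_congr rfl fun i _ => by ring

lemma koszulD_zero (xx : Fin n → A) (q : ℕ) : koszulD xx q (0 : KoszulDeg A n (q + 1)) = 0 := by
  simpa only [zero_smul] using koszulD_smul xx q 0 (0 : KoszulDeg A n (q + 1))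

lemma koszulD_sum {ι : Type*} (xx : Fin n → A) (q : ℕ) (t : Finset ι)
    (F : ι → KoszulDeg A n (q + 1)) :
    koszulD xx q (∑ k ∈ t, F k) = ∑ k ∈ t, koszulD xx q (F k) :=
  map_sum (AddMonoidHom.mk' (koszulD xx q) (koszulD_add xx q)) F t

lemma koszulTransition_add (aa : Fin n → A) (e q : ℕ) (f g : KoszulDeg A n q) :
    koszulTransition aa e q (f + g) = koszulTransition aa e q f + koszulTransition aa e q g := by
  ext s
  simp only [koszulTransition, Pi.add_apply, mul_add]

lemma koszulTransition_smul (aa : Fin n → A) (e q : ℕ) (c : A) (f : KoszulDeg A n q) :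
    koszulTransition aa e q (c • f) = c • koszulTransition aa e q f := by
  ext s
  simp only [koszulTransition, Pi.smul_apply, smul_eq_mul]
  ring

lemma koszulTransition_zero (aa : Fin n → A) (e q : ℕ) :
    koszulTransition aa e q (0 : KoszulDeg A n q) = 0 := by
  simpa only [zero_smul] using koszulTransition_smul aa e q 0 0

lemma koszulTransition_koszulTransition (aa : Fin n → A) (e e' q : ℕ) (f : KoszulDeg A n q) :
    koszulTransition aa e q (koszulTransition aa e' q f) = koszulTransition aa (e + e') q f := by
  ext s
  simp only [koszulTransition, pow_add, prod_mul_distrib]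
  ring

lemma koszulD_koszulTransition (aa : Fin n → A) (i e q : ℕ) (f : KoszulDeg A n (q + 1)) :
    koszulD (aa ^ i) q (koszulTransition aa e (q + 1) f)
      = koszulTransition aa e q (koszulD (aa ^ (i + e)) q f) := by
  ext s
  simp only [koszulD, koszulTransition, mul_sum]
  refine sum_congr rfl fun x _ => ?_
  rw [prod_insert (mem_compl.mp x.property)]
  simp only [Pi.pow_apply, pow_add]
  ring

noncomputable def koszulWedge (k : Fin n) {q : ℕ} (f : KoszulDeg A n q) : KoszulDeg A n (q + 1) :=
  fun s => if k ∈ s.val then (-1 : A) ^ #{l ∈ s.val | l < k} * koszulExtend f (s.val.erase k)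
    else 0

lemma koszulWedge_zero (k : Fin n) (q : ℕ) : koszulWedge k (0 : KoszulDeg A n q) = 0 := by
  ext s
  simp [koszulWedge, koszulExtend]

lemma koszulExtend_koszulWedge (k : Fin n) {q : ℕ} (f : KoszulDeg A n q) (t : Finset (Fin n)) :
    koszulExtend (koszulWedge k f) t
      = if k ∈ t then (-1 : A) ^ #{l ∈ t | l < k} * koszulExtend f (t.erase k) else 0 := by
  by_cases ht : t.card = q + 1
  · rw [koszulExtend_of_card _ ht]
    rfl
  · rw [koszulExtend, dif_neg ht]
    split_ifs with hk
    · rw [koszulExtend, dif_neg fun h => ht (by rw [← card_erase_add_one hk, h]), mul_zero]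
    · rfl

lemma koszulD_koszulWedge_of_notMem (xx : Fin n → A) (k : Fin n) {q : ℕ} (f : KoszulDeg A n q)
    (s : {s : Finset (Fin n) // s.card = q}) (hk : k ∉ s.val) :
    koszulD xx q (koszulWedge k f) s = xx k * f s := by
  rw [koszulD_apply, sum_eq_single_of_mem k (mem_compl.mpr hk) fun i hi hik => ?_]
  · rw [koszulExtend_koszulWedge, if_pos (mem_insert_self k _), filter_insert,
      if_neg (lt_irrefl k), erase_insert hk, koszulExtend_of_card _ s.property]
    linear_combination (xx k * f s) * neg_one_pow_mul_self (R := A) #{l ∈ s.val | l < k}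
  · rw [koszulExtend_koszulWedge, if_neg fun h => (mem_insert.mp h).elim (hik ·.symm) hk,
      mul_zero]

lemma koszulD_koszulWedge_add_of_mem (xx : Fin n → A) (k : Fin n) {q : ℕ}
    (f : KoszulDeg A n (q + 1)) (s : {s : Finset (Fin n) // s.card = q + 1}) (hk : k ∈ s.val) :
    koszulD xx (q + 1) (koszulWedge k f) s + koszulWedge k (koszulD xx q f) s = xx k * f s := by
  have hcard : (s.val.erase k).card = q := by rw [card_erase_of_mem hk, s.property]; rfl
  have hwedge : koszulWedge k (koszulD xx q f) s
      = (-1 : A) ^ #{l ∈ s.val | l < k} * koszulD xx q f ⟨s.val.erase k, hcard⟩ := by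
    rw [koszulWedge, if_pos hk, koszulExtend_of_card _ hcard]
  rw [hwedge, koszulD_apply, koszulD_apply]
  dsimp only
  rw [compl_erase, sum_insert (by simpa using hk), filter_erase, erase_eq_of_notMem (by simp),
    insert_erase hk, koszulExtend_of_card _ s.property, mul_add, mul_sum, add_left_comm,
    ← sum_add_distrib]
  -- the terms indexed by `i ∉ s` cancel in pairs; what is left is the term `i = k`
  rw [sum_eq_zero fun i hi => ?_]
  · linear_combination (xx k * f s) * neg_one_pow_mul_self (R := A) #{l ∈ s.val | l < k}
  replace hi : i ∉ s.val := mem_compl.mp hi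
  have hik : i ≠ k := fun h => hi (h ▸ hk)
  rw [koszulExtend_koszulWedge, if_pos (mem_insert_of_mem hk), erase_insert_of_ne hik]
  have hsign : (-1 : A) ^ #{l ∈ s.val | l < i} * (-1) ^ #{l ∈ insert i s.val | l < k}
      = -((-1) ^ #{l ∈ s.val | l < k} * (-1) ^ #{l ∈ s.val.erase k | l < i}) := by
    rw [← pow_add, ← pow_add, card_filter_lt_add_card_filter_lt_insert hk hi, pow_succ,
      mul_neg_one]
  linear_combination (xx i * koszulExtend f (insert i (s.val.erase k))) * hsign

lemma koszulD_koszulWedge_add_koszulWedge_koszulD (xx : Fin n → A) (k : Fin n) {q : ℕ}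
    (f : KoszulDeg A n (q + 1)) :
    koszulD xx (q + 1) (koszulWedge k f) + koszulWedge k (koszulD xx q f) = xx k • f := by
  ext s
  by_cases hk : k ∈ s.val
  · exact koszulD_koszulWedge_add_of_mem xx k f s hk
  · rw [Pi.add_apply, koszulD_koszulWedge_of_notMem xx k f s hk]
    simp [koszulWedge, hk]

lemma koszulD_sum_smul_koszulWedge (xx : Fin n → A) {q : ℕ} {f : KoszulDeg A n (q + 1)}
    (hf : koszulD xx q f = 0) (r : Fin n → A) :
    koszulD xx (q + 1) (∑ k, r k • koszulWedge k f) = (∑ k, r k * xx k) • f := by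
  rw [koszulD_sum, sum_smul]
  refine sum_congr rfl fun k _ => ?_
  have hom := koszulD_koszulWedge_add_koszulWedge_koszulD xx k f
  rw [hf, koszulWedge_zero, add_zero] at hom
  rw [koszulD_smul, hom, smul_smul]

lemma koszulD_sum_smul_koszulWedge_zero (xx : Fin n → A) (f : KoszulDeg A n 0) (r : Fin n → A) :
    koszulD xx 0 (∑ k, r k • koszulWedge k f) = (∑ k, r k * xx k) • f := by
  rw [koszulD_sum, sum_smul]
  refine sum_congr rfl fun k _ => ?_
  ext s
  rw [koszulD_smul, Pi.smul_apply, koszulD_koszulWedge_of_notMem xx k f s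
    (by simp [card_eq_zero.mp s.property]), Pi.smul_apply, smul_eq_mul, smul_eq_mul, mul_assoc]

lemma coneFst_koszulD (xx : Fin n → A) (y : A) (q : ℕ) (f : KoszulDeg A (n + 1) (q + 1)) :
    coneFst (koszulD (snoc xx y) q f)
      = koszulD xx q (coneFst f) + ((-1) ^ q * y) • coneSnd f := by
  ext t
  simp only [coneFst, Pi.add_apply, Pi.smul_apply, smul_eq_mul, koszulD_apply]
  rw [compl_map_castSuccEmb, sum_insert (last_notMem_map_castSuccEmb _), sum_map, add_comm]
  congr 1
  · refine sum_congr rfl fun i _ => ?_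
    rw [← map_insert, koszulExtend_map_castSuccEmb, castSuccEmb_apply, snoc_castSucc,
      card_filter_map_castSuccEmb_lt]
  · rw [filter_map_castSuccEmb_lt_last, card_map, t.property, snoc_last,
      koszulExtend_insert_last_map_castSuccEmb, koszulExtend_of_card _ t.property]

lemma coneSnd_koszulD (xx : Fin n → A) (y : A) (q : ℕ) (f : KoszulDeg A (n + 1) (q + 2)) :
    coneSnd (koszulD (snoc xx y) (q + 1) f) = koszulD xx q (coneSnd f) := by
  ext t
  simp only [coneSnd, koszulD_apply]
  rw [compl_insert_last_map_castSuccEmb, sum_map]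
  refine sum_congr rfl fun i _ => ?_
  rw [castSuccEmb_apply, snoc_castSucc, card_filter_insert_last_map_castSuccEmb_lt, insert_comm,
    ← castSuccEmb_apply, ← map_insert, koszulExtend_insert_last_map_castSuccEmb]

lemma coneFst_koszulTransition (aa : Fin n → A) (b : A) (e q : ℕ) (f : KoszulDeg A (n + 1) q) :
    coneFst (koszulTransition (snoc aa b) e q f) = koszulTransition aa e q (coneFst f) := by
  ext t
  simp [coneFst, koszulTransition]

lemma coneSnd_koszulTransition (aa : Fin n → A) (b : A) (e q : ℕ)
    (f : KoszulDeg A (n + 1) (q + 1)) :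
    coneSnd (koszulTransition (snoc aa b) e (q + 1) f)
      = b ^ e • koszulTransition aa e q (coneSnd f) := by
  ext t
  simp only [coneSnd, koszulTransition, Pi.smul_apply, smul_eq_mul,
    prod_insert (last_notMem_map_castSuccEmb _), prod_map, coe_castSuccEmb, snoc_last, snoc_castSucc]
  ring

lemma koszulD_snoc_coneMk_zero (xx : Fin n → A) (y : A) {q : ℕ} {z : KoszulDeg A n (q + 1)}
    (hz : koszulD xx q z = 0) : koszulD (Fin.snoc xx y) q (coneMk z 0) = 0 := by
  have hfst : coneFst (koszulD (Fin.snoc xx y) q (coneMk z 0)) = coneFst 0 := by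
    rw [coneFst_koszulD, coneFst_coneMk, coneSnd_coneMk, hz, smul_zero, add_zero]
    rfl
  cases q with
  | zero => exact cone_ext_zero hfst
  | succ q => exact cone_ext hfst (by rw [coneSnd_koszulD, coneSnd_coneMk, koszulD_zero]; rfl)

/-- The isomorphism `K(xx ∘ rev) ≅ K(xx)`: `(-1) ^ q.choose 2` is the sign of reversing a
`q`-fold wedge product. -/
noncomputable def koszulReverse {q : ℕ} (f : KoszulDeg A n q) : KoszulDeg A n q :=
  fun s => (-1) ^ q.choose 2 * f ⟨s.val.map revPerm.toEmbedding, by rw [card_map, s.property]⟩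

lemma koszulExtend_koszulReverse {q : ℕ} (f : KoszulDeg A n q) (t : Finset (Fin n)) :
    koszulExtend (koszulReverse f) t
      = (-1) ^ q.choose 2 * koszulExtend f (t.map revPerm.toEmbedding) := by
  by_cases ht : #t = q
  · rw [koszulExtend_of_card _ ht, koszulExtend_of_card _ (by rw [card_map, ht])]
    rfl
  · rw [koszulExtend, koszulExtend, dif_neg ht, dif_neg (by rwa [card_map]), mul_zero]

lemma koszulReverse_zero (q : ℕ) : koszulReverse (0 : KoszulDeg A n q) = 0 := by
  ext s
  simp [koszulReverse]

lemma koszulReverse_koszulReverse {q : ℕ} (f : KoszulDeg A n q) :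
    koszulReverse (koszulReverse f) = f := by
  ext s
  simp only [koszulReverse, ← mul_assoc, neg_one_pow_mul_self, one_mul, map_revPerm_map_revPerm]

lemma koszulReverse_koszulTransition (aa : Fin n → A) (e q : ℕ) (f : KoszulDeg A n q) :
    koszulReverse (koszulTransition aa e q f)
      = koszulTransition (aa ∘ rev) e q (koszulReverse f) := by
  ext s
  simp only [koszulReverse, koszulTransition, prod_map, Equiv.coe_toEmbedding, revPerm_apply,
    Function.comp_apply]
  ring

lemma koszulD_koszulReverse (xx : Fin n → A) (q : ℕ) (f : KoszulDeg A n (q + 1)) :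
    koszulD xx q (koszulReverse f) = koszulReverse (koszulD (xx ∘ rev) q f) := by
  ext s
  simp only [koszulReverse]
  rw [koszulD_apply, koszulD_apply, compl_map_revPerm, sum_map, mul_sum]
  refine sum_congr rfl fun i hi => ?_
  replace hi : i ∉ s.val := mem_compl.mp hi
  have hsign : (-1 : A) ^ #{k ∈ s.val | k < i} * (-1) ^ (q + 1).choose 2
      = (-1) ^ q.choose 2 * (-1) ^ #{k ∈ s.val.map revPerm.toEmbedding | k < rev i} := by
    have hcard := card_filter_map_revPerm_lt_add hi
    rw [s.property] at hcard
    have hexp : #{k ∈ s.val | k < i} + (q + 1).choose 2 = q.choose 2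
        + #{k ∈ s.val.map revPerm.toEmbedding | k < rev i} + 2 * #{k ∈ s.val | k < i} := by
      have hchoose : (q + 1).choose 2 = q + q.choose 2 := by
        rw [Nat.choose_succ_succ', Nat.choose_one_right]
      omega
    rw [← pow_add, ← pow_add, hexp, pow_add _ _ (2 * _), pow_mul, neg_one_sq, one_pow, mul_one]
  rw [koszulExtend_koszulReverse, Equiv.coe_toEmbedding, revPerm_apply, Function.comp_apply,
    rev_rev, map_insert]
  simp only [Equiv.coe_toEmbedding, revPerm_apply]
  linear_combination
    (xx i * koszulExtend f (insert (rev i) (s.val.map revPerm.toEmbedding))) * hsign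

end Koszul

section WeaklyProregular

open Fin

variable {A : Type*} [CommRing A] {n : ℕ}

lemma isWeaklyProregular_iff_exists_add (aa : Fin n → A) :
    IsWeaklyProregular aa ↔ ∀ q i : ℕ, ∃ e : ℕ, ∀ f : KoszulDeg A n (q + 1),
      koszulD (aa ^ (i + e)) q f = 0 →
      ∃ g : KoszulDeg A n (q + 2),
        koszulD (aa ^ i) (q + 1) g = koszulTransition aa e (q + 1) f := by
  refine forall₂_congr fun q i =>
    ⟨fun ⟨j, hij, H⟩ => ?_, fun ⟨e, H⟩ => ⟨i + e, Nat.le_add_right i e, ?_⟩⟩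
  · obtain ⟨e, rfl⟩ := Nat.exists_eq_add_of_le hij
    rw [Nat.add_sub_cancel_left] at H
    exact ⟨e, H⟩
  · rw [Nat.add_sub_cancel_left]
    exact H

lemma exists_sum_mul_pow_eq_pow {cc : Fin n → A} {b : A}
    (hb : b ∈ (Ideal.span (Set.range cc)).radical) (e : ℕ) :
    ∃ (M : ℕ) (r : Fin n → A), ∑ k, r k * cc k ^ e = b ^ M := by
  have hle : Ideal.span (Set.range cc) ≤ (Ideal.span (Set.range (cc ^ e))).radical :=
    Ideal.span_le.mpr fun _ ⟨k, hk⟩ => ⟨e, Ideal.subset_span ⟨k, by rw [← hk]; rfl⟩⟩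
  obtain ⟨M, hM⟩ := Ideal.radical_le_radical_iff.mpr hle hb
  exact ⟨M, Ideal.mem_span_range_iff_exists_fun.mp hM⟩

lemma IsWeaklyProregular.comp_rev {aa : Fin n → A} (ha : IsWeaklyProregular aa) :
    IsWeaklyProregular (aa ∘ rev) := by
  rw [isWeaklyProregular_iff_exists_add] at ha ⊢
  intro q i
  obtain ⟨e, H⟩ := ha q i
  refine ⟨e, fun f hf => ?_⟩
  obtain ⟨g, hg⟩ := H (koszulReverse f) (by
    rw [koszulD_koszulReverse]
    change koszulReverse (koszulD ((aa ∘ rev) ^ (i + e)) q f) = 0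
    rw [hf, koszulReverse_zero])
  refine ⟨koszulReverse g, ?_⟩
  have hpow : ((aa ∘ rev) ^ i) ∘ rev = aa ^ i := funext fun k => by simp
  rw [koszulD_koszulReverse, hpow, hg, koszulReverse_koszulTransition, koszulReverse_koszulReverse]

lemma isWeaklyProregular_comp_rev_iff {aa : Fin n → A} :
    IsWeaklyProregular (aa ∘ rev) ↔ IsWeaklyProregular aa :=
  ⟨fun h => by simpa [Function.comp_def] using h.comp_rev, IsWeaklyProregular.comp_rev⟩

lemma exists_koszulD_snoc_eq_koszulTransition {cc : Fin n → A} {b : A} {q i e₁ e₂ : ℕ}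
    (P : ∀ U : KoszulDeg A n (q + 1), koszulD (cc ^ (i + e₁)) q U = 0 →
      ∃ p : KoszulDeg A n (q + 2),
        koszulD (cc ^ i) (q + 1) p = koszulTransition cc e₁ (q + 1) U)
    {f : KoszulDeg A (n + 1) (q + 1)} (hf : koszulD (Fin.snoc cc b ^ (i + e₁ + e₂)) q f = 0)
    {w : KoszulDeg A n (q + 1)}
    (hw : koszulD (cc ^ (i + e₁)) q w = b ^ e₂ • koszulTransition cc e₂ q (coneSnd f)) :
    ∃ g : KoszulDeg A (n + 1) (q + 2),
      koszulD (Fin.snoc cc b ^ i) (q + 1) g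
        = koszulTransition (Fin.snoc cc b) (e₁ + e₂) (q + 1) f := by
  have hfst : koszulD (cc ^ (i + e₁ + e₂)) q (coneFst f)
      = -((-1) ^ q * b ^ (i + e₁ + e₂)) • coneSnd f := by
    rw [neg_smul, eq_neg_iff_add_eq_zero, ← coneFst_koszulD, ← snoc_pow, hf]
    rfl
  obtain ⟨p, hp⟩ :=
    P (koszulTransition cc e₂ (q + 1) (coneFst f) + ((-1) ^ q * b ^ (i + e₁)) • w) (by
      rw [koszulD_add, koszulD_smul, koszulD_koszulTransition, hfst, hw, koszulTransition_smul,
        pow_add b (i + e₁)]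
      module)
  refine ⟨coneMk p (b ^ e₁ • koszulTransition cc e₁ (q + 1) w), cone_ext ?_ ?_⟩
  · rw [snoc_pow, coneFst_koszulD, coneFst_coneMk, coneSnd_coneMk, hp, coneFst_koszulTransition,
      koszulTransition_add, koszulTransition_smul, koszulTransition_koszulTransition, pow_add b i]
    module
  · rw [snoc_pow, coneSnd_koszulD, coneSnd_coneMk, coneSnd_koszulTransition, koszulD_smul,
      koszulD_koszulTransition, hw, koszulTransition_smul, koszulTransition_koszulTransition,
      smul_smul, pow_add]

lemma IsWeaklyProregular.snoc {cc : Fin n → A} {b : A} (hc : IsWeaklyProregular cc)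
    (hb : b ∈ (Ideal.span (Set.range cc)).radical) : IsWeaklyProregular (Fin.snoc cc b) := by
  rw [isWeaklyProregular_iff_exists_add] at hc ⊢
  intro q i
  obtain ⟨e₁, P⟩ := hc q i
  -- `w` comes from `b ^ M ∈ (cc ^ (i + e₁))` in degree `0`, and from weak proregularity of `cc`
  -- one degree lower otherwise.
  suffices ∃ e₂, ∀ f : KoszulDeg A (n + 1) (q + 1),
      koszulD (Fin.snoc cc b ^ (i + e₁ + e₂)) q f = 0 →
      ∃ w, koszulD (cc ^ (i + e₁)) q w = b ^ e₂ • koszulTransition cc e₂ q (coneSnd f) by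
    obtain ⟨e₂, hw⟩ := this
    refine ⟨e₁ + e₂, fun f hf => ?_⟩
    rw [← add_assoc] at hf
    obtain ⟨w, hw⟩ := hw f hf
    exact exists_koszulD_snoc_eq_koszulTransition P hf hw
  cases q with
  | zero =>
    obtain ⟨M, r, hr⟩ := exists_sum_mul_pow_eq_pow hb (i + e₁)
    refine ⟨M, fun f _ =>
      ⟨∑ k, r k • koszulWedge k (koszulTransition cc M 0 (coneSnd f)), ?_⟩⟩
    rw [koszulD_sum_smul_koszulWedge_zero]
    simp only [Pi.pow_apply, hr]
  | succ q =>
    obtain ⟨e₂, P'⟩ := hc q (i + e₁)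
    refine ⟨e₂, fun f hf => ?_⟩
    have hsnd := congrArg coneSnd hf
    rw [snoc_pow, coneSnd_koszulD] at hsnd
    obtain ⟨w, hw⟩ := P' (coneSnd f) hsnd
    exact ⟨b ^ e₂ • w, by rw [koszulD_smul, hw]⟩

lemma IsWeaklyProregular.of_snoc {cc : Fin n → A} {b : A} (h : IsWeaklyProregular (Fin.snoc cc b))
    (hb : b ∈ (Ideal.span (Set.range cc)).radical) : IsWeaklyProregular cc := by
  rw [isWeaklyProregular_iff_exists_add] at h ⊢
  intro q i
  obtain ⟨M, r, hr⟩ := exists_sum_mul_pow_eq_pow hb i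
  obtain ⟨e, P⟩ := h q (i + M)
  refine ⟨M + e, fun z hz => ?_⟩
  rw [← add_assoc] at hz
  obtain ⟨G, hG⟩ := P (coneMk z 0) (by rw [snoc_pow]; exact koszulD_snoc_coneMk_zero _ _ hz)
  have hsnd : koszulD (cc ^ (i + M)) q (coneSnd G) = 0 := by
    have := congrArg coneSnd hG
    rwa [snoc_pow, coneSnd_koszulD, coneSnd_koszulTransition, coneSnd_coneMk,
      koszulTransition_zero, smul_zero] at this
  have hfst : koszulD (cc ^ (i + M)) (q + 1) (coneFst G)
      = koszulTransition cc e (q + 1) z + (-((-1) ^ (q + 1) * b ^ (i + M))) • coneSnd G := by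
    rw [neg_smul, ← sub_eq_add_neg, eq_sub_iff_add_eq, ← coneFst_koszulD, ← snoc_pow, hG,
      coneFst_koszulTransition, coneFst_coneMk]
  -- `b ^ M • koszulTransition cc M (q + 1) (coneSnd G)` is a coboundary since `b ^ M ∈ (cc ^ i)`.
  refine ⟨koszulTransition cc M (q + 2) (coneFst G) + ((-1) ^ (q + 1) * b ^ i) •
    ∑ k, r k • koszulWedge k (koszulTransition cc M (q + 1) (coneSnd G)), ?_⟩
  rw [koszulD_add, koszulD_smul, koszulD_koszulTransition, hfst, koszulD_sum_smul_koszulWedge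
    _ (by rw [koszulD_koszulTransition, hsnd, koszulTransition_zero])]
  simp only [Pi.pow_apply, hr]
  rw [koszulTransition_add, koszulTransition_smul, koszulTransition_koszulTransition, pow_add b i]
  module

lemma isWeaklyProregular_comp_cast_iff {m : ℕ} (h : m = n) (aa : Fin n → A) :
    IsWeaklyProregular (aa ∘ Fin.cast h) ↔ IsWeaklyProregular aa := by
  subst h
  rfl

lemma isWeaklyProregular_snoc_iff {cc : Fin n → A} {b : A}
    (hb : b ∈ (Ideal.span (Set.range cc)).radical) :
    IsWeaklyProregular (Fin.snoc cc b) ↔ IsWeaklyProregular cc :=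
  ⟨(·.of_snoc hb), (·.snoc hb)⟩

lemma isWeaklyProregular_append_iff {m : ℕ} (aa : Fin n → A) (bb : Fin m → A)
    (hbb : ∀ l, bb l ∈ (Ideal.span (Set.range aa)).radical) :
    IsWeaklyProregular (append aa bb) ↔ IsWeaklyProregular aa := by
  induction m with
  | zero => rw [append_right_nil aa bb rfl, isWeaklyProregular_comp_cast_iff]
  | succ m ih =>
    have hrange : Set.range aa ⊆ Set.range (append aa (init bb)) := by
      rintro _ ⟨k, rfl⟩
      exact ⟨castAdd m k, append_left aa _ k⟩
    rw [← snoc_init_self bb, append_snoc, isWeaklyProregular_snoc_iff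
      (Ideal.radical_mono (Ideal.span_mono hrange) (hbb _))]
    exact ih (init bb) fun l => hbb _

end WeaklyProregular

/-- If `aa` and `bb` are finite sequences in `A` generating ideals with the same
radical, then `aa` is weakly proregular iff `bb` is weakly proregular. -/
theorem isWeaklyProregular_iff_of_radical_eq {A : Type*} [CommRing A]
    {n m : ℕ} (aa : Fin n → A) (bb : Fin m → A)
    (h : (Ideal.span (Set.range aa)).radical = (Ideal.span (Set.range bb)).radical) :
    IsWeaklyProregular aa ↔ IsWeaklyProregular bb := by
  have hbb : ∀ l, bb l ∈ (Ideal.span (Set.range aa)).radical :=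
    fun l => h ▸ Ideal.le_radical (Ideal.subset_span ⟨l, rfl⟩)
  have haa : ∀ l, (aa ∘ Fin.rev) l ∈ (Ideal.span (Set.range (bb ∘ Fin.rev))).radical := by
    rw [Fin.rev_surjective.range_comp, ← h]
    exact fun l => Ideal.le_radical (Ideal.subset_span ⟨_, rfl⟩)
  calc IsWeaklyProregular aa
      ↔ IsWeaklyProregular (Fin.append aa bb) := (isWeaklyProregular_append_iff aa bb hbb).symm
    _ ↔ IsWeaklyProregular (Fin.append aa bb ∘ Fin.rev) := isWeaklyProregular_comp_rev_iff.symm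
    _ ↔ IsWeaklyProregular (Fin.append (bb ∘ Fin.rev) (aa ∘ Fin.rev)) := by
      rw [Fin.append_comp_rev, isWeaklyProregular_comp_cast_iff]
    _ ↔ IsWeaklyProregular (bb ∘ Fin.rev) := isWeaklyProregular_append_iff _ _ haa
    _ ↔ IsWeaklyProregular bb := isWeaklyProregular_comp_rev_iff
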